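/- Let m ≥ 1, n = 2^m, let d ≥ 1, and let S be a nonempty subset of (ZMod n)^d. Then there exist a frequency f ∈ S and a function G : (ZMod n)^d → ℂ such that the discrete Fourier transform Ĝ satisfies Ĝ(f) = 1 and Ĝ(f') = 0 for every f' ∈ S with f' ≠ f, and such that the support of G has cardinality at most |S|. -/
import Mathlib


open scoped BigOperators

/-- The `d`-dimensional discrete Fourier transform on `(ZMod n)^d`:
`x̂(f) = ∑_t x(t) · e^{-2πi·(f·t)/n}` where `f·t = ∑_q f_q·t_q` is computed in `ZMod n`. -/
noncomputable def dft (n d : ℕ) [NeZero n] (x : (Fin d → ZMod n) → ℂ) :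
    (Fin d → ZMod n) → ℂ :=
  fun f => ∑ t : Fin d → ZMod n, x t *
    Complex.exp (-(2 * (Real.pi : ℂ) * Complex.I) *
      (((∑ q, f q * t q : ZMod n)).val : ℂ) / (n : ℂ))

open Submodule Module

/-- Key extraction lemma: if `v : ι → X → ℂ` is a linearly independent family, then any
target vector `w : ι → ℂ` can be realized as `i ↦ ∑ t, G t * v i t` for some `G` supported
on at most `card ι` points. -/
lemma key_lemma {ι X : Type*} [Fintype ι] [Fintype X] [Nonempty X]
    (v : ι → X → ℂ) (hv : LinearIndependent ℂ v) (w : ι → ℂ) :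
    ∃ G : X → ℂ, (∀ i, ∑ t, G t * v i t = w i) ∧
      (Function.support G).ncard ≤ Fintype.card ι := by
  classical
  set col : X → (ι → ℂ) := fun t i => v i t with hcol
  -- the columns span all of `ι → ℂ`
  have hspan : span ℂ (Set.range col) = ⊤ := by
    by_contra h
    obtain ⟨φ, hφ0, hφ⟩ := Submodule.exists_dual_map_eq_bot_of_lt_top
      (lt_top_iff_ne_top.2 h) inferInstance
    have hcolz : ∀ t, φ (col t) = 0 := by
      intro t
      have : φ (col t) ∈ (span ℂ (Set.range col)).map φ :=
        ⟨col t, subset_span ⟨t, rfl⟩, rfl⟩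
      rw [hφ] at this; simpa using this
    have hc : ∀ i, φ (fun j => if i = j then (1 : ℂ) else 0) = 0 := by
      refine Fintype.linearIndependent_iff.1 hv
        (fun i => φ (fun j => if i = j then 1 else 0)) ?_
      funext t
      have h1 : φ (col t) = ∑ i, col t i • φ (fun j => if i = j then 1 else 0) :=
        LinearMap.pi_apply_eq_sum_univ φ (col t)
      have h2 := hcolz t
      rw [h1] at h2
      simpa [Finset.sum_apply, smul_eq_mul, mul_comm] using h2
    apply hφ0
    apply LinearMap.ext
    intro x
    rw [LinearMap.pi_apply_eq_sum_univ φ x]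
    simp [hc]
  -- extract a linearly independent spanning subfamily of columns
  obtain ⟨s, hs_sub, hs_span, hs_li⟩ := exists_linearIndependent ℂ (Set.range col)
  rw [hspan] at hs_span
  have hsfin : s.Finite := (Set.finite_range col).subset hs_sub
  haveI : Fintype s := hsfin.fintype
  have hcard : s.toFinset.card ≤ Fintype.card ι := by
    have h1 : finrank ℂ (span ℂ s) = s.toFinset.card := finrank_span_set_eq_card hs_li
    rw [hs_span, finrank_top, Module.finrank_pi] at h1
    omega
  have hw : w ∈ span ℂ s := hs_span ▸ mem_top
  obtain ⟨c, hcsup, hcsum⟩ := Submodule.mem_span_set.1 hw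
  -- choose preimages of the selected columns
  have upre : ∀ g : ι → ℂ, g ∈ s → ∃ t, col t = g := fun g hg => hs_sub hg
  set u : (ι → ℂ) → X := fun g =>
    if h : ∃ t, col t = g then h.choose else Classical.arbitrary X with hu_def
  have hu : ∀ g ∈ s, col (u g) = g := by
    intro g hg
    have h : ∃ t, col t = g := upre g hg
    simp only [hu_def, dif_pos h]
    exact h.choose_spec
  set G : X → ℂ := fun t => ∑ g ∈ c.support.filter (fun g => u g = t), c g with hG_def
  refine ⟨G, ?_, ?_⟩
  · intro i
    have step1 : ∀ t, G t * v i t =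
        ∑ g ∈ c.support.filter (fun g => u g = t), c g * g i := by
      intro t
      rw [hG_def]
      rw [Finset.sum_mul]
      refine Finset.sum_congr rfl ?_
      intro g hg
      rw [Finset.mem_filter] at hg
      have hgs : g ∈ s := hcsup hg.1
      have : col t = g := by rw [← hg.2]; exact hu g hgs
      have hvig : v i t = g i := by rw [← this]
      rw [hvig]
    calc ∑ t, G t * v i t
        = ∑ t, ∑ g ∈ c.support.filter (fun g => u g = t), c g * g i := by
          exact Finset.sum_congr rfl fun t _ => step1 t
      _ = ∑ g ∈ c.support, c g * g i := by
          exact Finset.sum_fiberwise_of_maps_to (fun g _ => Finset.mem_univ (u g)) _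
      _ = w i := by
          have := congrArg (fun z : ι → ℂ => z i) hcsum
          simpa [Finsupp.sum, Finset.sum_apply, smul_eq_mul] using this
  · have hsub : Function.support G ⊆ ↑(c.support.image u) := by
      intro t ht
      rw [Function.mem_support] at ht
      by_contra htm
      apply ht
      rw [hG_def]
      apply Finset.sum_eq_zero
      intro g hg
      rw [Finset.mem_filter] at hg
      exact absurd (Finset.mem_image.2 ⟨g, hg.1, hg.2⟩) (by simpa using htm)
    calc (Function.support G).ncard
        ≤ (↑(c.support.image u) : Set X).ncard :=
          Set.ncard_le_ncard hsub (Set.toFinite _)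
      _ = (c.support.image u).card := Set.ncard_coe_finset _
      _ ≤ c.support.card := Finset.card_image_le
      _ ≤ s.toFinset.card := by
          apply Finset.card_le_card
          intro g hg
          exact Set.mem_toFinset.2 (hcsup hg)
      _ ≤ Fintype.card ι := hcard

lemma stdAddChar_neg_eq (n : ℕ) [NeZero n] (x : ZMod n) :
    ZMod.stdAddChar (-x) = Complex.exp (-(2 * (Real.pi : ℂ) * Complex.I) *
      ((x.val : ℕ) : ℂ) / (n : ℂ)) := by
  have h1 : ((-(x.val : ℤ) : ℤ) : ZMod n) = -x := by
    push_cast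
    rw [ZMod.natCast_zmod_val]
  have h2 := ZMod.stdAddChar_coe (N := n) (-(x.val : ℤ))
  rw [h1] at h2
  rw [h2]
  congr 1
  push_cast
  ring

/-- Linear independence of the character family. -/
lemma li_chars (n d : ℕ) [NeZero n] (S : Finset (Fin d → ZMod n)) :
    LinearIndependent ℂ (fun f : {x // x ∈ S} => (fun t : Fin d → ZMod n =>
      Complex.exp (-(2 * (Real.pi : ℂ) * Complex.I) *
        (((∑ q, (f : Fin d → ZMod n) q * t q : ZMod n)).val : ℂ) / (n : ℂ)))) := by
  classical
  -- the additive monoid hom `t ↦ -∑ q, f q * t q`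
  have Lhom : ∀ f : (Fin d → ZMod n), ∃ L : (Fin d → ZMod n) →+ ZMod n, ∀ t, L t = -∑ q, f q * t q := by
    intro f
    refine ⟨AddMonoidHom.mk' (fun t => -∑ q, f q * t q) ?_, fun t => rfl⟩
    intro a b
    simp only [Pi.add_apply, mul_add, Finset.sum_add_distrib]
    ring
  choose L hL using Lhom
  set φ : (Fin d → ZMod n) → AddChar (Fin d → ZMod n) ℂ := fun f => (ZMod.stdAddChar (N := n)).compAddMonoidHom (L f)
    with hφdef
  have hφ : ∀ f t, φ f t = Complex.exp (-(2 * (Real.pi : ℂ) * Complex.I) *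
      (((∑ q, f q * t q : ZMod n)).val : ℂ) / (n : ℂ)) := by
    intro f t
    have : φ f t = ZMod.stdAddChar (L f t) := rfl
    rw [this, hL f t, stdAddChar_neg_eq]
  -- injectivity of f ↦ φ f
  have hinj : Function.Injective φ := by
    intro f g hfg
    funext q
    have happ : φ f (Pi.single q 1) = φ g (Pi.single q 1) := by rw [hfg]
    have hsum : ∀ h : (Fin d → ZMod n), (∑ q', h q' * (Pi.single q (1 : ZMod n) : (Fin d → ZMod n)) q') = h q := by
      intro h
      rw [Finset.sum_eq_single q]
      · simp
      · intro b _ hb; simp [Pi.single_apply, hb]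
      · intro hq; exact absurd (Finset.mem_univ q) hq
    have h1 : ZMod.stdAddChar (-(f q)) = ZMod.stdAddChar (-(g q)) := by
      have e1 : φ f (Pi.single q 1) = ZMod.stdAddChar (-(f q)) := by
        show ZMod.stdAddChar (L f (Pi.single q 1)) = _
        rw [hL, hsum]
      have e2 : φ g (Pi.single q 1) = ZMod.stdAddChar (-(g q)) := by
        show ZMod.stdAddChar (L g (Pi.single q 1)) = _
        rw [hL, hsum]
      rw [← e1, ← e2, happ]
    have := ZMod.injective_stdAddChar h1
    exact neg_injective this
  -- linear independence via Dedekind's theorem on monoid homs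
  have hli := (linearIndependent_monoidHom (Multiplicative (Fin d → ZMod n)) ℂ).comp
    (fun f : {x // x ∈ S} => AddChar.toMonoidHomEquiv (φ (f : (Fin d → ZMod n))))
    (by
      intro a b hab
      have := AddChar.toMonoidHomEquiv.injective hab
      exact Subtype.ext (hinj this))
  have heq : (fun f : {x // x ∈ S} => (fun t : (Fin d → ZMod n) =>
      Complex.exp (-(2 * (Real.pi : ℂ) * Complex.I) *
        (((∑ q, (f : (Fin d → ZMod n)) q * t q : ZMod n)).val : ℂ) / (n : ℂ)))) =
      (fun f : {x // x ∈ S} => ⇑(AddChar.toMonoidHomEquiv (φ (f : (Fin d → ZMod n))))) := by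
    funext f t
    rw [AddChar.coe_toMonoidHomEquiv]
    exact (hφ (f : (Fin d → ZMod n)) (Multiplicative.toAdd t)).symm
  have hli2 : LinearIndependent ℂ
      (fun f : {x // x ∈ S} => ⇑(AddChar.toMonoidHomEquiv (φ (↑f)))) := hli
  rw [heq]
  exact hli2

theorem stmt0 (m : ℕ) (hm : 1 ≤ m) (n : ℕ) (hn : n = 2 ^ m) [NeZero n]
    (d : ℕ) (hd : 1 ≤ d) (S : Finset (Fin d → ZMod n)) (hS : S.Nonempty) :
    ∃ f ∈ S, ∃ G : (Fin d → ZMod n) → ℂ,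
      dft n d G f = 1 ∧ (∀ f' ∈ S, f' ≠ f → dft n d G f' = 0) ∧
      (Function.support G).ncard ≤ S.card := by
  classical
  obtain ⟨f₀, hf₀⟩ := hS
  obtain ⟨G, hG, hsupp⟩ := key_lemma
    (fun f : {x // x ∈ S} => (fun t : Fin d → ZMod n =>
      Complex.exp (-(2 * (Real.pi : ℂ) * Complex.I) *
        (((∑ q, (f : Fin d → ZMod n) q * t q : ZMod n)).val : ℂ) / (n : ℂ))))
    (li_chars n d S)
    (fun f => if (f : Fin d → ZMod n) = f₀ then 1 else 0)
  have hdft : ∀ f, dft n d G f = ∑ t, G t *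
      Complex.exp (-(2 * (Real.pi : ℂ) * Complex.I) *
        (((∑ q, f q * t q : ZMod n)).val : ℂ) / (n : ℂ)) := fun f => rfl
  refine ⟨f₀, hf₀, G, ?_, ?_, ?_⟩
  · have := hG ⟨f₀, hf₀⟩
    rw [hdft f₀]
    simpa using this
  · intro f' hf' hne
    have := hG ⟨f', hf'⟩
    rw [hdft f']
    simpa [hne] using this
  · simpa [Fintype.card_coe] using hsupp
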